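/- For every t > 0 and every natural number m, ∫_ℝ x^{2m} s_t(x) dx = t^m · (2m)! / (m! · (m+1)!), and ∫_ℝ x^{2m+1} s_t(x) dx = 0. -/

import Mathlib

/-!
Substituting `x = 2√t sin θ` turns the `n`-th moment into `(2√t)^(n+2) / (2πt)` times
`∫ sin^n θ cos^2 θ` over `[-π/2, π/2]`. Since `cos` vanishes at both endpoints, integration by
parts gives the Wallis recursion `∫ sin^(n+2) = (n+1)/(n+2) ∫ sin^n` without boundary terms; it
kills the odd powers (as `∫ sin = 0`) and yields `π (2m)! / (4^m m!^2)` for the even ones.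
-/

open MeasureTheory

/-- The semicircle density of variance `t`. -/
noncomputable def semicircleDensity (t x : ℝ) : ℝ :=
  if x ^ 2 ≤ 4 * t then Real.sqrt (4 * t - x ^ 2) / (2 * Real.pi * t) else 0

open Real intervalIntegral
open scoped Nat

section SinPow

variable {a b : ℝ}

theorem integral_sin_pow_add_two_of_cos_eq_zero (ha : cos a = 0) (hb : cos b = 0) (n : ℕ) :
    ∫ θ in a..b, sin θ ^ (n + 2) = (n + 1) / (n + 2) * ∫ θ in a..b, sin θ ^ n := by
  simp [integral_sin_pow, ha, hb]

theorem integral_sin_pow_odd_of_cos_eq_zero (ha : cos a = 0) (hb : cos b = 0) (m : ℕ) :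
    ∫ θ in a..b, sin θ ^ (2 * m + 1) = 0 := by
  induction m with
  | zero => simp [ha, hb]
  | succ m ih =>
    rw [show 2 * (m + 1) + 1 = 2 * m + 1 + 2 by ring,
      integral_sin_pow_add_two_of_cos_eq_zero ha hb, ih, mul_zero]

theorem integral_sin_pow_even_of_cos_eq_zero (ha : cos a = 0) (hb : cos b = 0) (m : ℕ) :
    ∫ θ in a..b, sin θ ^ (2 * m) = (b - a) * (2 * m)! / (4 ^ m * (m ! : ℝ) ^ 2) := by
  induction m with
  | zero => simp
  | succ m ih =>
    rw [mul_add_one, integral_sin_pow_add_two_of_cos_eq_zero ha hb, ih, Nat.factorial_succ,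
      Nat.factorial_succ, Nat.factorial_succ]
    push_cast
    field_simp
    ring

theorem integral_sin_pow_mul_cos_sq_of_cos_eq_zero (ha : cos a = 0) (hb : cos b = 0) (n : ℕ) :
    ∫ θ in a..b, sin θ ^ n * cos θ ^ 2 = (∫ θ in a..b, sin θ ^ n) / (n + 2) := by
  have hcos : ∀ θ, sin θ ^ n * cos θ ^ 2 = sin θ ^ n - sin θ ^ (n + 2) := fun θ => by
    rw [cos_sq']; ring
  simp_rw [hcos]
  rw [intervalIntegral.integral_sub
      ((by fun_prop : Continuous fun θ => sin θ ^ n).intervalIntegrable _ _)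
      ((by fun_prop : Continuous fun θ => sin θ ^ (n + 2)).intervalIntegrable _ _),
    integral_sin_pow_add_two_of_cos_eq_zero ha hb]
  field_simp
  ring

end SinPow

theorem integral_pow_mul_sqrt_sq_sub_sq {r : ℝ} (hr : 0 ≤ r) (n : ℕ) :
    ∫ x in -r..r, x ^ n * √(r ^ 2 - x ^ 2) =
      r ^ (n + 2) * ∫ θ in -(π / 2)..π / 2, sin θ ^ n * cos θ ^ 2 := by
  have hsub := integral_comp_mul_deriv (a := -(π / 2)) (b := π / 2) (f := fun θ => r * sin θ)
    (g := fun x => x ^ n * √(r ^ 2 - x ^ 2))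
    (fun θ _ => (hasDerivAt_sin θ).const_mul r) (by fun_prop) (by fun_prop)
  simp only [sin_neg, sin_pi_div_two, mul_neg, mul_one] at hsub
  rw [← hsub, ← intervalIntegral.integral_const_mul]
  refine integral_congr fun θ hθ => ?_
  have hcos : 0 ≤ r * cos θ := mul_nonneg hr <| cos_nonneg_of_mem_Icc <| by
    rwa [Set.uIcc_of_le (by linarith [pi_pos])] at hθ
  have hsqrt : √(r ^ 2 - (r * sin θ) ^ 2) = r * cos θ := by
    rw [← sqrt_sq hcos, mul_pow r (cos θ), cos_sq']
    ring_nf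
  simp only [Function.comp, hsqrt]
  ring

theorem integral_indicator_Icc_eq_intervalIntegral {a b : ℝ} (hab : a ≤ b) (f : ℝ → ℝ) :
    ∫ x, (Set.Icc a b).indicator f x = ∫ x in a..b, f x := by
  rw [MeasureTheory.integral_indicator measurableSet_Icc, integral_Icc_eq_integral_Ioc,
    integral_of_le hab]

theorem semicircleDensity_eq_indicator {t : ℝ} (ht : 0 ≤ t) :
    semicircleDensity t =
      (Set.Icc (-(2 * √t)) (2 * √t)).indicator fun x => √(4 * t - x ^ 2) / (2 * π * t) := by
  ext x
  have hmem : x ^ 2 ≤ 4 * t ↔ x ∈ Set.Icc (-(2 * √t)) (2 * √t) := by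
    rw [Set.mem_Icc, ← abs_le, ← sq_le_sq₀ (abs_nonneg x) (by positivity), sq_abs, mul_pow,
      sq_sqrt ht]
    norm_num
  simp only [semicircleDensity, Set.indicator_apply, hmem]

theorem integral_pow_mul_semicircleDensity {t : ℝ} (ht : 0 < t) (n : ℕ) :
    ∫ x, x ^ n * semicircleDensity t x =
      (2 * √t) ^ (n + 2) / (2 * π * t * (n + 2)) * ∫ θ in -(π / 2)..π / 2, sin θ ^ n := by
  have h4t : 4 * t = (2 * √t) ^ 2 := by rw [mul_pow, sq_sqrt ht.le]; norm_num
  rw [semicircleDensity_eq_indicator ht.le]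
  simp_rw [← Set.indicator_mul_right _ (fun x => x ^ n)]
  rw [integral_indicator_Icc_eq_intervalIntegral (by linarith [sqrt_nonneg t]), h4t]
  simp_rw [mul_div_assoc', intervalIntegral.integral_div,
    integral_pow_mul_sqrt_sq_sub_sq (by positivity : 0 ≤ 2 * √t),
    integral_sin_pow_mul_cos_sq_of_cos_eq_zero ((cos_neg _).trans cos_pi_div_two)
      cos_pi_div_two]
  field_simp

/-- Moments of the semicircle distribution of variance `t`: the even moments are Catalan
numbers scaled by powers of `t`, and the odd moments vanish. -/
theorem semicircle_moments (t : ℝ) (ht : 0 < t) (m : ℕ) :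
    (∫ x : ℝ, x ^ (2 * m) * semicircleDensity t x) =
        t ^ m * (Nat.factorial (2 * m)) / (Nat.factorial m * Nat.factorial (m + 1)) ∧
    (∫ x : ℝ, x ^ (2 * m + 1) * semicircleDensity t x) = 0 := by
  have hcos : cos (-(π / 2)) = 0 := (cos_neg _).trans cos_pi_div_two
  constructor
  · rw [integral_pow_mul_semicircleDensity ht,
      integral_sin_pow_even_of_cos_eq_zero hcos cos_pi_div_two,
      show 2 * m + 2 = 2 * (m + 1) by ring, pow_mul, mul_pow, sq_sqrt ht.le, Nat.factorial_succ]
    push_cast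
    field_simp
    ring
  · rw [integral_pow_mul_semicircleDensity ht,
      integral_sin_pow_odd_of_cos_eq_zero hcos cos_pi_div_two, mul_zero]
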